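/- arXiv:math/0605203 — 3 statements merged into one kernel-verified Lean document; each statement's English description precedes it below -/
import Mathlib

section
/- Let i < j-1 be integers and A a subset of the open integer interval (i..j) with j-1 ∉ A. Then the polynomial K_{i,j}(A) in Z[x_i,...,x_{j-1},y_{i+1},...,y_j], defined by K_{i,j}(A) = Σ_{B ⊆ (i..j)} H_{i,j}(A,B) · Π_{t ∈ B∪{i}} (y_{t+1} - x_t), equals K_{i,j-1}(A) (viewed in the smaller polynomial ring). -/
open Finset

noncomputable section

/-- The polynomial ring `ℤ[xₜ, y_q : t, q ∈ ℤ]`. -/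
abbrev MyR : Type := MvPolynomial (ℤ ⊕ ℤ) ℤ

/-- Its field of fractions. -/
abbrev MyFF : Type := FractionRing MyR

/-- The variable `x_t`. -/
def Xv (t : ℤ) : MyFF := algebraMap MyR MyFF (MvPolynomial.X (Sum.inl t))

/-- The variable `y_q`. -/
def Yv (q : ℤ) : MyFF := algebraMap MyR MyFF (MvPolynomial.X (Sum.inr q))

/-- `D_i(t) = max {s ∈ D ∪ {i} : s < t}`. -/
def Di (i : ℤ) (D : Finset ℤ) (t : ℤ) : ℤ :=
  (((insert i D).filter (fun s => s < t)).max).unbotD i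

/-- `H_{i,j}(A,B)` viewed in the fraction field. -/
def Hfr (i : ℤ) (A B : Finset ℤ) : MyFF :=
  ∑ D ∈ (B \ A).powerset, (-1 : MyFF) ^ D.card *
    (∏ t ∈ A, (Xv t - Xv (Di i D t))) / ∏ t ∈ B, (Xv t - Xv (Di i D t))

/-- `K_{i,j}(A) = Σ_{B ⊆ (i..j)} H_{i,j}(A,B) Π_{t ∈ B ∪ {i}} (y_{t+1} - x_t)`. -/
def Kfr (i j : ℤ) (A : Finset ℤ) : MyFF :=
  ∑ B ∈ (Finset.Ioo i j).powerset, Hfr i A B * ∏ t ∈ insert i B, (Yv (t + 1) - Xv t)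

/-!
Split the sum defining `K_{i,j}(A)` according to whether `j - 1 ∈ B`. The sets `B ∌ j - 1` give
exactly `K_{i,j-1}(A)`. For `B ∋ j - 1` we have `H_{i,j}(A,B) = 0`: since `j - 1 ∉ A` is the
largest element of `A ∪ B`, the subsets `D` of `B \ A` pair off as `D ↔ insert (j - 1) D`, which
flips the sign `(-1)^{|D|}` and leaves every `D_i(t)` with `t ≤ j - 1` unchanged.
-/

lemma Di_insert_of_le (i m : ℤ) (D : Finset ℤ) (t : ℤ) (h : t ≤ m) :
    Di i (insert m D) t = Di i D t := by
  rw [Di, Di, insert_comm, filter_insert, if_neg (by omega)]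

lemma Hfr_eq_zero_of_max_mem_sdiff (i m : ℤ) (A B : Finset ℤ) (hmB : m ∈ B) (hmA : m ∉ A)
    (hA : ∀ t ∈ A, t ≤ m) (hB : ∀ t ∈ B, t ≤ m) : Hfr i A B = 0 := by
  have hm : m ∉ (B \ A).erase m := notMem_erase m _
  rw [Hfr, ← insert_erase (mem_sdiff.mpr ⟨hmB, hmA⟩), sum_powerset_insert hm,
    ← sum_add_distrib]
  refine sum_eq_zero fun D hD => ?_
  have hmD : m ∉ D := fun h => hm (mem_powerset.mp hD h)
  have hDi : ∀ S : Finset ℤ, (∀ t ∈ S, t ≤ m) →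
      ∏ t ∈ S, (Xv t - Xv (Di i (insert m D) t)) = ∏ t ∈ S, (Xv t - Xv (Di i D t)) :=
    fun S hS => prod_congr rfl fun t ht => by rw [Di_insert_of_le i m D t (hS t ht)]
  rw [hDi A hA, hDi B hB, card_insert_of_notMem hmD, pow_succ]
  ring

/-- Lemma 4(i): if `j-1 ∉ A` then `K_{i,j}(A) = K_{i,j-1}(A)`. -/
theorem stmt0 (i j : ℤ) (A : Finset ℤ) (hij : i < j - 1)
    (hA : A ⊆ Finset.Ioo i j) (hj : j - 1 ∉ A) :
    Kfr i j A = Kfr i (j - 1) A := by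
  have hIoo : Ioo i j = insert (j - 1) (Ioo i (j - 1)) := by
    ext t
    simp only [mem_Ioo, mem_insert]
    omega
  have hAle : ∀ t ∈ A, t ≤ j - 1 := fun t ht => by
    have := mem_Ioo.mp (hA ht)
    omega
  unfold Kfr
  rw [hIoo, sum_powerset_insert (by simp), add_eq_left]
  refine sum_eq_zero fun B hB => ?_
  have hBle : ∀ t ∈ insert (j - 1) B, t ≤ j - 1 := by
    intro t ht
    rcases mem_insert.mp ht with rfl | ht
    · rfl
    · have := mem_Ioo.mp (mem_powerset.mp hB ht)
      omega
  rw [Hfr_eq_zero_of_max_mem_sdiff i (j - 1) A _ (mem_insert_self _ _) hj hAle hBle, zero_mul]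

end
end

section
/- Let i < j-1 be integers and A a subset of (i..j) with j-1 ∈ A, and set k := max([i..j) \ A) (the maximum of the half-open interval [i..j) with A removed; note i ∈ [i..j)\A so k is well defined). Then K_{i,j}(A) = K_{i,j-1}(A \ {j-1}) · (y_j - x_k) + δ_{k ≠ i} · K_{i,j-1}({k} ∪ A \ {j-1}), where δ_{k≠i} is 1 if k ≠ i and 0 otherwise. -/
/-!
Split the sum defining `K_{i,j}(A)` according to whether `j - 1 ∈ B`, and put `A' = A \ {j-1}`.
If `j - 1 ∈ B`, the factor `x_{j-1} - x_{D_i(j-1)}` cancels, so the term is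
`H_{i,j-1}(A', B \ {j-1})` times `y_j - x_{j-1}`. If `j - 1 ∉ B`, every `D ⊆ B \ A'` lies in
`(i..k]` because `(k..j-1) ⊆ A'`, and writing
`x_{j-1} - x_{D_i(j-1)} = (x_{j-1} - x_k) + (x_k - x_{D_i(j-1)})` gives
`H(A, B) = H(A', B) (x_{j-1} - x_k) + Σ_D (x_k - x_{D_i(j-1)}) (summand of H(A', B))`.
In the last sum the summands with `k ∈ D ∪ {i}` vanish, and for the others
`D_i(j-1) = D_i(k)`, so it is `H(A' ∪ {k}, B)` when `k ≠ i` and `0` when `k = i`. The factors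
`x_{j-1} - x_k` and `y_j - x_{j-1}` add up to `y_j - x_k`.
-/

open Finset

noncomputable section

lemma Xv_injective : Function.Injective Xv := fun _ _ h =>
  Sum.inl_injective <| MvPolynomial.X_injective <| IsFractionRing.injective MyR MyFF h

lemma Xv_sub_ne_zero {s t : ℤ} (h : s ≠ t) : Xv s - Xv t ≠ 0 :=
  sub_ne_zero.2 (Xv_injective.ne h)

section Di

variable {i t : ℤ} {D : Finset ℤ}

lemma Di_lt (D : Finset ℤ) (h : i < t) : Di i D t < t := by
  unfold Di
  rcases hm : ((insert i D).filter (· < t)).max with _ | m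
  · exact h
  · exact (mem_filter.1 (mem_of_max hm)).2

lemma Di_eq_Di_of_forall_lt {t' : ℤ} (ht : ∀ s ∈ insert i D, s < t)
    (ht' : ∀ s ∈ insert i D, s < t') :
    Di i D t = Di i D t' := by
  unfold Di
  rw [filter_true_of_mem ht, filter_true_of_mem ht']

lemma Di_eq_of_isGreatest {k : ℤ} (hk : k ∈ insert i D) (hle : ∀ s ∈ insert i D, s ≤ k)
    (hkt : k < t) : Di i D t = k := by
  unfold Di
  rw [filter_true_of_mem fun s hs => (hle s hs).trans_lt hkt,
    le_antisymm (Finset.max_le fun s hs => WithBot.coe_le_coe.2 (hle s hs)) (le_max hk)]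
  rfl

end Di

def Hterm (i : ℤ) (A B D : Finset ℤ) : MyFF :=
  (-1 : MyFF) ^ D.card * (∏ t ∈ A, (Xv t - Xv (Di i D t))) / ∏ t ∈ B, (Xv t - Xv (Di i D t))

section Hterm

variable {i a : ℤ} {A B : Finset ℤ}

lemma Hfr_eq_sum_Hterm (i : ℤ) (A B : Finset ℤ) :
    Hfr i A B = ∑ D ∈ (B \ A).powerset, Hterm i A B D := rfl

lemma Hterm_insert_left (D : Finset ℤ) (ha : a ∉ A) :
    Hterm i (insert a A) B D = (Xv a - Xv (Di i D a)) * Hterm i A B D := by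
  simp only [Hterm, prod_insert ha]
  ring

lemma Hterm_insert_insert (D : Finset ℤ) (ha : a ∉ A) (hb : a ∉ B) (hia : i < a) :
    Hterm i (insert a A) (insert a B) D = Hterm i A B D := by
  have hne : Xv a - Xv (Di i D a) ≠ 0 := Xv_sub_ne_zero (Di_lt D hia).ne'
  simp only [Hterm, prod_insert ha, prod_insert hb]
  field_simp

lemma Hfr_insert_insert (ha : a ∉ A) (hb : a ∉ B) (hia : i < a) :
    Hfr i (insert a A) (insert a B) = Hfr i A B := by
  rw [Hfr_eq_sum_Hterm, Hfr_eq_sum_Hterm, insert_sdiff_insert, sdiff_insert_of_notMem hb]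
  exact sum_congr rfl fun D _ => Hterm_insert_insert D ha hb hia

end Hterm

lemma Hfr_insert_of_gap {i k n : ℤ} {A B : Finset ℤ} (hik : i ≤ k) (hkn : k < n) (hkA : k ∉ A)
    (hnA : n ∉ A) (hgap : Ioo k n ⊆ A) (hB : B ⊆ Ioo i n) :
    Hfr i (insert n A) B =
      Hfr i A B * (Xv n - Xv k) + if k = i then 0 else Hfr i (insert k A) B := by
  have hnB : n ∉ B := fun h => (mem_Ioo.1 (hB h)).2.ne rfl
  have hle : ∀ D ⊆ B \ A, ∀ s ∈ insert i D, s ≤ k := by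
    intro D hD s hs
    rcases mem_insert.1 hs with rfl | hs
    · exact hik
    obtain ⟨hsB, hsA⟩ := mem_sdiff.1 (hD hs)
    obtain ⟨-, hsn⟩ := mem_Ioo.1 (hB hsB)
    by_contra! hks
    exact hsA (hgap (mem_Ioo.2 ⟨hks, hsn⟩))
  have hsplit : Hfr i (insert n A) B = Hfr i A B * (Xv n - Xv k) +
      ∑ D ∈ (B \ A).powerset, (Xv k - Xv (Di i D n)) * Hterm i A B D := by
    rw [Hfr_eq_sum_Hterm, Hfr_eq_sum_Hterm, sdiff_insert_of_notMem hnB, sum_mul,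
      ← sum_add_distrib]
    refine sum_congr rfl fun D _ => ?_
    rw [Hterm_insert_left D hnA]
    ring
  rw [hsplit]
  congr 1
  split_ifs with hki
  · subst hki
    have hBA : B \ A = ∅ :=
      sdiff_eq_empty_iff_subset.2 fun s hs => hgap (mem_Ioo.2 (mem_Ioo.1 (hB hs)))
    rw [hBA, powerset_empty, sum_singleton,
      Di_eq_of_isGreatest (mem_insert_self k ∅) (hle ∅ (empty_subset _)) hkn, sub_self, zero_mul]
  · -- the summands with `k ∈ D` vanish since then `D(n) = k`
    have hvanish : ∀ D ∈ (B \ A).powerset, D ∉ ((B \ A).erase k).powerset →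
        (Xv k - Xv (Di i D n)) * Hterm i A B D = 0 := by
      intro D hD hDk
      have hD := mem_powerset.1 hD
      have hkD : k ∈ D := by
        by_contra hkD
        exact hDk (mem_powerset.2 fun s hs => mem_erase.2 ⟨ne_of_mem_of_not_mem hs hkD, hD hs⟩)
      rw [Di_eq_of_isGreatest (mem_insert_of_mem hkD) (hle D hD) hkn, sub_self, zero_mul]
    rw [Hfr_eq_sum_Hterm, sdiff_insert, ← sum_subset (powerset_mono.2 (erase_subset k _)) hvanish]
    refine sum_congr rfl fun D hD => ?_
    have hD := mem_powerset.1 hD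
    have hlt : ∀ s ∈ insert i D, s < k := fun s hs =>
      lt_of_le_of_ne (hle D (hD.trans (erase_subset _ _)) s hs) <| by
        rintro rfl
        rcases mem_insert.1 hs with h | h
        · exact hki h
        · exact notMem_erase s _ (hD h)
    rw [Hterm_insert_left D hkA, Di_eq_Di_of_forall_lt (fun s hs => (hlt s hs).trans hkn) hlt]

lemma Kfr_succ_insert_of_gap {i k n : ℤ} {A : Finset ℤ} (hik : i ≤ k) (hkn : k < n) (hkA : k ∉ A)
    (hnA : n ∉ A) (hgap : Ioo k n ⊆ A) :
    Kfr i (n + 1) (insert n A) =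
      Kfr i n A * (Yv (n + 1) - Xv k) + (if k ≠ i then 1 else 0) * Kfr i n (insert k A) := by
  have hin : i < n := hik.trans_lt hkn
  set P : Finset ℤ → MyFF := fun B => ∏ t ∈ insert i B, (Yv (t + 1) - Xv t)
  have hsucc : Ioo i (n + 1) = insert n (Ioo i n) := by
    rw [Ioo_add_one_right_eq_Ioc, Ioo_insert_right hin]
  have hterm : ∀ B ∈ (Ioo i n).powerset,
      Hfr i (insert n A) B * P B + Hfr i (insert n A) (insert n B) * P (insert n B) =
        Hfr i A B * P B * (Yv (n + 1) - Xv k) +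
          (if k ≠ i then 1 else 0) * (Hfr i (insert k A) B * P B) := by
    intro B hB
    have hB := mem_powerset.1 hB
    have hnB : n ∉ B := fun h => (mem_Ioo.1 (hB h)).2.ne rfl
    have hP : P (insert n B) = (Yv (n + 1) - Xv n) * P B := by
      simp only [P, insert_comm i n]
      exact prod_insert (by simp [hin.ne', hnB])
    rw [Hfr_insert_of_gap hik hkn hkA hnA hgap hB, Hfr_insert_insert hnA hnB hin, hP]
    by_cases hki : k = i <;>
      simp only [hki, ne_eq, not_true_eq_false, not_false_eq_true, if_true, if_false, add_zero,
        zero_mul, one_mul] <;> ring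
  simp only [Kfr]
  rw [hsucc, sum_powerset_insert (by simp), ← sum_add_distrib, sum_congr rfl hterm,
    sum_add_distrib, ← sum_mul, ← mul_sum]

theorem stmt1_general (i j : ℤ) (A : Finset ℤ)
    (hA : A ⊆ Finset.Ioo i j) (hj : j - 1 ∈ A) :
    Kfr i j A =
      Kfr i (j - 1) (A.erase (j - 1)) * (Yv j - Xv (((Finset.Ico i j \ A).max).unbotD i)) +
      (if ((Finset.Ico i j \ A).max).unbotD i ≠ i then 1 else 0) *
        Kfr i (j - 1) (insert (((Finset.Ico i j \ A).max).unbotD i) (A.erase (j - 1))) := by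
  obtain ⟨n, rfl⟩ : ∃ n, j = n + 1 := ⟨j - 1, by ring⟩
  rw [add_sub_cancel_right] at hj ⊢
  have hin : i < n := (mem_Ioo.1 (hA hj)).1
  have hne : (Ico i (n + 1) \ A).Nonempty :=
    ⟨i, mem_sdiff.2 ⟨mem_Ico.2 ⟨le_rfl, by omega⟩, fun h => (mem_Ioo.1 (hA h)).1.ne rfl⟩⟩
  rw [← coe_max' hne, WithBot.unbotD_coe]
  set k := (Ico i (n + 1) \ A).max' hne
  obtain ⟨hkI, hkA⟩ := mem_sdiff.1 ((Ico i (n + 1) \ A).max'_mem hne)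
  obtain ⟨hik, hkn⟩ := mem_Ico.1 hkI
  have hgap : Ioo k n ⊆ A.erase n := fun s hs => by
    obtain ⟨hks, hsn⟩ := mem_Ioo.1 hs
    refine mem_erase.2 ⟨hsn.ne, ?_⟩
    by_contra hsA
    exact (le_max' _ s (mem_sdiff.2 ⟨mem_Ico.2 ⟨by omega, by omega⟩, hsA⟩)).not_gt hks
  have hkn' : k < n := lt_of_le_of_ne (by omega) (ne_of_mem_of_not_mem hj hkA).symm
  simpa only [insert_erase hj] using
    Kfr_succ_insert_of_gap hik hkn' (fun h => hkA (mem_of_mem_erase h)) (notMem_erase n A) hgap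

/-- Lemma 4(ii): if `j-1 ∈ A` and `k = max ([i..j) \ A)`, then
`K_{i,j}(A) = K_{i,j-1}(A\{j-1})·(y_j - x_k) + δ_{k≠i}·K_{i,j-1}({k} ∪ A\{j-1})`. -/
theorem stmt1 (i j : ℤ) (A : Finset ℤ) (hij : i < j - 1)
    (hA : A ⊆ Finset.Ioo i j) (hj : j - 1 ∈ A) :
    Kfr i j A =
      Kfr i (j - 1) (A.erase (j - 1)) * (Yv j - Xv (((Finset.Ico i j \ A).max).unbotD i)) +
      (if ((Finset.Ico i j \ A).max).unbotD i ≠ i then 1 else 0) *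
        Kfr i (j - 1) (insert (((Finset.Ico i j \ A).max).unbotD i) (A.erase (j - 1))) :=
  stmt1_general i j A hA hj
end
end

section
/- Let p be prime, μ, λ integer sequences, 1 ≤ i < j-1 < n-1. Suppose j-1 ∈ 𝔅^μ(i,j), j-1 ∉ 𝔅^{μ,λ}(i,j), and there exist a weakly decreasing injection ε : 𝔅^{μ,λ}(i,j-1) → ℭ^μ(i,j-1) and a weakly increasing injection τ : 𝔅^{μ,λ}(i,j-1) → 𝔅^μ(i,j-1). Define, for x ∈ {i} ∪ Im ε and 1 ≤ k ≤ j-1: θ_k(i) := j-1; θ_k(x) := ε^{-1}(x) if x > i and ε^{-1}(x) < k; θ_k(x) := τ(ε^{-1}(x)) if x > i and ε^{-1}(x) ≥ k. Then each θ_k is a weakly increasing injection from {i} ∪ Im ε into 𝔅^{μ,λ,k}(i,j). -/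
/-!
On `ε(𝔅^{μ,λ}(i,j-1))` we have `θ ∘ ε = (b ↦ if b < k then b else τ b)`, which is injective
because `τ` is injective and weakly increasing: a value `b < k` never equals `τ b' ≥ b' ≥ k`.
These values all lie below `j - 1 = θ i`, so `θ` stays injective after adding `i`.
Membership follows from `𝔅^{μ,λ,k}(i,j) = 𝔅^{μ,λ}(i,k) ∪ (𝔅^μ(i,j) ∩ [k..j))`: the values
`b < k` lie in `𝔅^{μ,λ}(i,j-1)` (and `b < n`), while `τ b` and `j - 1` are at least `k` and
lie in `𝔅^μ`.
-/

open Finset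

/-- `B^{μ,λ,k}(i,t) ∈ ℤ/pℤ`: the class of `t - i + μ_i - μ_{t+1}` if `k ≤ t`
and of `t - i + μ_i - λ_{t+1}` if `k > t`. -/
def Bres (p : ℕ) (μ lam : ℤ → ℤ) (k i t : ℤ) : ZMod p :=
  if k ≤ t then ((t - i + μ i - μ (t + 1) : ℤ) : ZMod p)
  else ((t - i + μ i - lam (t + 1) : ℤ) : ZMod p)

/-- `𝔅^{μ,λ,k}(i,j) = {a : i ≤ a < j, B^{μ,λ,k}(i,a) = 0}`. -/
noncomputable def BSet (p : ℕ) (μ lam : ℤ → ℤ) (k i j : ℤ) : Finset ℤ :=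
  (Finset.Ico i j).filter fun a => Bres p μ lam k i a = 0

/-- `ℭ^μ(i,j) = {a : i < a < j, a - i + μ_i - μ_a ≡ 0 (mod p)}`. -/
noncomputable def CSet (p : ℕ) (μ : ℤ → ℤ) (i j : ℤ) : Finset ℤ :=
  (Finset.Ioo i j).filter fun a => ((a - i + μ i - μ a : ℤ) : ZMod p) = 0

section InjOn

variable {α β : Type*} [LinearOrder α]

theorem Set.InjOn.ite_lt {s : Set α} {τ : α → α} (k : α) (hτinj : Set.InjOn τ s)
    (hτ : ∀ b ∈ s, b ≤ τ b) : Set.InjOn (fun b => if b < k then b else τ b) s := by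
  intro b hb b' hb' h
  dsimp only at h
  split_ifs at h with hbk hb'k hb'k
  · exact h
  · exact absurd (h ▸ hτ b' hb') (not_le.2 (hbk.trans_le (not_lt.1 hb'k)))
  · exact absurd (h ▸ hτ b hb) (not_le.2 (hb'k.trans_le (not_lt.1 hbk)))
  · exact hτinj hb hb' h

theorem Set.InjOn.insert_of_lt {f : β → α} {s : Set β} {a : β} (hs : Set.InjOn f s)
    (hlt : ∀ x ∈ s, f x < f a) : Set.InjOn f (insert a s) := by
  rw [Set.injOn_insert fun ha => (hlt a ha).false]
  exact ⟨hs, fun ⟨x, hx, hxa⟩ => (hlt x hx).ne hxa⟩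

end InjOn

section BSet

variable {p : ℕ} {μ lam : ℤ → ℤ} {k k' i j j' a : ℤ}

theorem mem_BSet : a ∈ BSet p μ lam k i j ↔ (i ≤ a ∧ a < j) ∧ Bres p μ lam k i a = 0 := by
  simp [BSet]

theorem le_of_mem_BSet (ha : a ∈ BSet p μ lam k i j) : i ≤ a := (mem_BSet.1 ha).1.1

theorem lt_of_mem_BSet (ha : a ∈ BSet p μ lam k i j) : a < j := (mem_BSet.1 ha).1.2

theorem Bres_of_le (h : k ≤ a) (k' : ℤ) : Bres p μ lam k i a = Bres p μ μ k' i a := by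
  unfold Bres
  split_ifs <;> rfl

theorem Bres_of_lt (hk : a < k) (hk' : a < k') : Bres p μ lam k i a = Bres p μ lam k' i a := by
  simp only [Bres, if_neg (not_le.2 hk), if_neg (not_le.2 hk')]

theorem mem_BSet_of_lt (ha : a ∈ BSet p μ lam k' i j) (hk : a < k) (hk' : a < k')
    (hj : j ≤ j') : a ∈ BSet p μ lam k i j' := by
  rw [mem_BSet, Bres_of_lt hk hk']
  exact ⟨⟨le_of_mem_BSet ha, (lt_of_mem_BSet ha).trans_le hj⟩, (mem_BSet.1 ha).2⟩

theorem mem_BSet_of_le (ha : a ∈ BSet p μ μ k' i j) (hk : k ≤ a) (hj : j ≤ j') :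
    a ∈ BSet p μ lam k i j' := by
  rw [mem_BSet, Bres_of_le hk k']
  exact ⟨⟨le_of_mem_BSet ha, (lt_of_mem_BSet ha).trans_le hj⟩, (mem_BSet.1 ha).2⟩

end BSet

theorem stmt9_general (p : ℕ) (n : ℤ) (μ lam : ℤ → ℤ)
    (i j : ℤ) (hjn : j - 1 < n - 1)
    (hmem : j - 1 ∈ BSet p μ μ n i j)
    (ε τ : ℤ → ℤ)
    (hε : ∀ b ∈ BSet p μ lam n i (j - 1), ε b ≤ b ∧ ε b ∈ CSet p μ i (j - 1))
    (hτinj : Set.InjOn τ ((BSet p μ lam n i (j - 1) : Finset ℤ) : Set ℤ))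
    (hτ : ∀ b ∈ BSet p μ lam n i (j - 1), b ≤ τ b ∧ τ b ∈ BSet p μ μ n i (j - 1)) :
    ∀ k : ℤ, 1 ≤ k → k ≤ j - 1 →
      ∀ θ : ℤ → ℤ, θ i = j - 1 →
        (∀ b ∈ BSet p μ lam n i (j - 1), θ (ε b) = if b < k then b else τ b) →
        Set.InjOn θ ((insert i ((BSet p μ lam n i (j - 1)).image ε) : Finset ℤ) : Set ℤ) ∧
        ∀ x ∈ insert i ((BSet p μ lam n i (j - 1)).image ε),
          x ≤ θ x ∧ θ x ∈ BSet p μ lam k i j := by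
  intro k _ hkj θ hθi hθε
  have hθε_lt : ∀ b ∈ BSet p μ lam n i (j - 1), θ (ε b) < j - 1 := fun b hb => by
    rw [hθε b hb]
    split_ifs
    · exact lt_of_mem_BSet hb
    · exact lt_of_mem_BSet (hτ b hb).2
  have hθε_mem : ∀ b ∈ BSet p μ lam n i (j - 1), θ (ε b) ∈ BSet p μ lam k i j := fun b hb => by
    rw [hθε b hb]
    split_ifs with hbk
    · exact mem_BSet_of_lt hb hbk (by linarith [lt_of_mem_BSet hb]) (by omega)
    · exact mem_BSet_of_le (hτ b hb).2 ((not_lt.1 hbk).trans (hτ b hb).1) (by omega)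
  refine ⟨?_, ?_⟩
  · rw [coe_insert, coe_image]
    refine (((hτinj.ite_lt k fun b hb => (hτ b hb).1).congr
      fun b hb => (hθε b hb).symm).image_of_comp).insert_of_lt ?_
    rintro _ ⟨b, hb, rfl⟩
    exact hθi ▸ hθε_lt b hb
  · simp only [mem_insert, mem_image, forall_eq_or_imp, forall_exists_index, and_imp,
      forall_apply_eq_imp_iff₂]
    refine ⟨hθi ▸ ⟨le_of_mem_BSet hmem, mem_BSet_of_le hmem hkj le_rfl⟩,
      fun b hb => ⟨?_, hθε_mem b hb⟩⟩
    rw [hθε b hb]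
    split_ifs <;> linarith [(hε b hb).1, (hτ b hb).1]

/-- Construction of the maps `θ_k` in the proof of Theorem 5(iii): given
`j-1 ∈ 𝔅^μ(i,j)`, `j-1 ∉ 𝔅^{μ,λ}(i,j)`, a weakly decreasing injection
`ε : 𝔅^{μ,λ}(i,j-1) → ℭ^μ(i,j-1)` and a weakly increasing injection
`τ : 𝔅^{μ,λ}(i,j-1) → 𝔅^μ(i,j-1)`, any map `θ` with `θ(i) = j-1` and
`θ(ε(b)) = b` if `b < k`, `θ(ε(b)) = τ(b)` if `b ≥ k`, is a weakly increasing
injection from `{i} ∪ Im ε` into `𝔅^{μ,λ,k}(i,j)`. -/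
theorem stmt9 (p : ℕ) (hp : p.Prime) (n : ℤ) (hn : 1 < n) (μ lam : ℤ → ℤ)
    (i j : ℤ) (hi : 1 ≤ i) (hij : i < j - 1) (hjn : j - 1 < n - 1)
    (hmem : j - 1 ∈ BSet p μ μ n i j) (hnmem : j - 1 ∉ BSet p μ lam n i j)
    (ε τ : ℤ → ℤ)
    (hεinj : Set.InjOn ε ((BSet p μ lam n i (j - 1) : Finset ℤ) : Set ℤ))
    (hε : ∀ b ∈ BSet p μ lam n i (j - 1), ε b ≤ b ∧ ε b ∈ CSet p μ i (j - 1))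
    (hτinj : Set.InjOn τ ((BSet p μ lam n i (j - 1) : Finset ℤ) : Set ℤ))
    (hτ : ∀ b ∈ BSet p μ lam n i (j - 1), b ≤ τ b ∧ τ b ∈ BSet p μ μ n i (j - 1)) :
    ∀ k : ℤ, 1 ≤ k → k ≤ j - 1 →
      ∀ θ : ℤ → ℤ, θ i = j - 1 →
        (∀ b ∈ BSet p μ lam n i (j - 1), θ (ε b) = if b < k then b else τ b) →
        Set.InjOn θ ((insert i ((BSet p μ lam n i (j - 1)).image ε) : Finset ℤ) : Set ℤ) ∧
        ∀ x ∈ insert i ((BSet p μ lam n i (j - 1)).image ε),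
          x ≤ θ x ∧ θ x ∈ BSet p μ lam k i j :=
  stmt9_general p n μ lam i j hjn hmem ε τ hε hτinj hτ
end
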